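/- For every real parameter a, the integral of z·R(U(z)) over z ∈ ℝ equals −1/2. -/

import Mathlib

/-!
Since `U' = -U (1 - U)`, the integrand `z R(a, U z) = -z U' (U - a)` can be integrated by parts;
as `log (1 - U)` is a primitive of `U` and `log (1 - U) + U` one of `U²`, this gives the explicit
primitive `kinkPrimitive a`, which tends to `1/2` at `-∞` and to `0` at `+∞`. The integrand is
integrable because `U (1 - U) ≤ e^{-z}` and `U (1 - U)` is even.
-/

open Real MeasureTheory

/-- The bistable reaction term `R(u) = u(1-u)(u-a)`. -/
noncomputable def R (a u : ℝ) : ℝ := u * (1 - u) * (u - a)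

/-- The kink profile `U(z) = 1/(1+exp z)`. -/
noncomputable def U (z : ℝ) : ℝ := 1 / (1 + Real.exp z)

open Filter Set Asymptotics Topology

lemma U_pos (z : ℝ) : 0 < U z := by unfold U; positivity

lemma U_lt_one (z : ℝ) : U z < 1 := by
  rw [U, div_lt_one (by positivity)]
  linarith [exp_pos z]

lemma U_neg (z : ℝ) : U (-z) = 1 - U z := by
  have := exp_pos z
  simp only [U, exp_neg]
  field_simp
  ring

lemma one_sub_U_eq_exp_mul (z : ℝ) : 1 - U z = exp z * U z := by
  simp only [U]
  field_simp
  ring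

lemma U_le_exp_neg (z : ℝ) : U z ≤ exp (-z) := by
  rw [U, exp_neg, one_div]
  exact inv_anti₀ (exp_pos z) (by linarith)

@[fun_prop]
lemma continuous_U : Continuous U :=
  continuous_const.div (continuous_const.add continuous_exp) fun z => by positivity

lemma hasDerivAt_U (z : ℝ) : HasDerivAt U (-(U z * (1 - U z))) z := by
  have h := ((hasDerivAt_exp z).const_add 1).inv (by positivity : 1 + exp z ≠ 0)
  rw [show U = fun x => (1 + exp x)⁻¹ from funext fun x => one_div _]
  refine h.congr_deriv ?_
  field_simp
  ring

lemma tendsto_U_atTop : Tendsto U atTop (𝓝 0) := by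
  exact tendsto_of_tendsto_of_tendsto_of_le_of_le tendsto_const_nhds
    tendsto_exp_neg_atTop_nhds_zero (fun z => (U_pos z).le) U_le_exp_neg

lemma tendsto_U_atBot : Tendsto U atBot (𝓝 1) := by
  have h := (tendsto_U_atTop.comp tendsto_neg_atBot_atTop).const_sub 1
  simpa [Function.comp_def, U_neg] using h

lemma tendsto_mul_U_atTop : Tendsto (fun z => z * U z) atTop (𝓝 0) := by
  have h : Tendsto (fun z : ℝ => z * exp (-z)) atTop (𝓝 0) := by
    simpa using tendsto_pow_mul_exp_neg_atTop_nhds_zero 1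
  refine tendsto_of_tendsto_of_tendsto_of_le_of_le' tendsto_const_nhds h ?_ ?_
  all_goals filter_upwards [eventually_ge_atTop 0] with z hz
  · exact mul_nonneg hz (U_pos z).le
  · exact mul_le_mul_of_nonneg_left (U_le_exp_neg z) hz

lemma tendsto_mul_one_sub_U_atBot : Tendsto (fun z => z * (1 - U z)) atBot (𝓝 0) := by
  have h := (tendsto_mul_U_atTop.comp tendsto_neg_atBot_atTop).neg
  simpa [Function.comp_def, U_neg] using h

lemma U_mul_one_sub_U_neg (z : ℝ) : U (-z) * (1 - U (-z)) = U z * (1 - U z) := by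
  rw [U_neg]; ring

lemma integrable_mul_U_mul_one_sub_U : Integrable fun z => z * (U z * (1 - U z)) := by
  have hcont : Continuous fun z => z * (U z * (1 - U z)) := by fun_prop
  refine hcont.locallyIntegrable.integrable_of_isBigO_atTop_of_norm_isNegInvariant
    (g := fun x => exp (-x) * x ^ ((2 : ℝ) - 1)) (Eventually.of_forall fun z => ?_) ?_
    ⟨Ioi 0, Ioi_mem_atTop 0, GammaIntegral_convergent two_pos⟩
  · simp [U_mul_one_sub_U_neg]
  · refine IsBigO.of_bound 1 ?_
    filter_upwards [eventually_ge_atTop 0] with z hz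
    have hU : 0 ≤ U z * (1 - U z) := mul_nonneg (U_pos z).le (by linarith [U_lt_one z])
    have hUexp : U z * (1 - U z) ≤ exp (-z) := by nlinarith [U_le_exp_neg z, U_pos z]
    rw [norm_of_nonneg (mul_nonneg hz hU), norm_of_nonneg (by positivity), one_mul,
      show (2 : ℝ) - 1 = 1 by norm_num, rpow_one, mul_comm (exp _)]
    exact mul_le_mul_of_nonneg_left hUexp hz

noncomputable def kinkPrimitive (a z : ℝ) : ℝ :=
  -z * U z * (U z / 2 - a) + (1 / 2 - a) * log (1 - U z) + U z / 2

lemma hasDerivAt_kinkPrimitive (a z : ℝ) :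
    HasDerivAt (kinkPrimitive a) (z * R a (U z)) z := by
  have hU := hasDerivAt_U z
  have hlog := (hU.const_sub 1).log (by linarith [U_lt_one z])
  have h := ((((hasDerivAt_id z).neg.mul hU).mul ((hU.div_const 2).sub_const a)).add
    (hlog.const_mul (1 / 2 - a))).add (hU.div_const 2)
  refine h.congr_deriv ?_
  have : 1 - U z ≠ 0 := by linarith [U_lt_one z]
  simp only [R, Pi.neg_apply, Pi.mul_apply, id]
  field_simp
  ring

/-- The divergent terms `∓ z (1/2 - a)` of the two summands cancel, exposing the limit at `-∞`. -/
lemma kinkPrimitive_eq' (a z : ℝ) : kinkPrimitive a z =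
    z * (1 - U z) * ((1 + U z) / 2 - a) + (1 / 2 - a) * log (U z) + U z / 2 := by
  have hlog : log (1 - U z) = z + log (U z) := by
    rw [one_sub_U_eq_exp_mul, log_mul (exp_pos z).ne' (U_pos z).ne', log_exp]
  rw [kinkPrimitive, hlog]
  ring

lemma tendsto_kinkPrimitive_atTop (a : ℝ) : Tendsto (kinkPrimitive a) atTop (𝓝 0) := by
  have h := ((tendsto_mul_U_atTop.neg.mul ((tendsto_U_atTop.div_const 2).sub_const a)).add
    (((tendsto_U_atTop.const_sub 1).log (by norm_num)).const_mul (1 / 2 - a))).add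
    (tendsto_U_atTop.div_const 2)
  simp only [sub_zero, log_one] at h
  convert h using 2 with z
  · simp only [kinkPrimitive]; ring
  · ring

lemma tendsto_kinkPrimitive_atBot (a : ℝ) : Tendsto (kinkPrimitive a) atBot (𝓝 (1 / 2)) := by
  have h := ((tendsto_mul_one_sub_U_atBot.mul
    (((tendsto_U_atBot.const_add 1).div_const 2).sub_const a)).add
    ((tendsto_U_atBot.log (by norm_num)).const_mul (1 / 2 - a))).add
    (tendsto_U_atBot.div_const 2)
  simp only [log_one] at h
  convert h using 2 with z
  · exact kinkPrimitive_eq' a z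
  · ring

lemma integrable_mul_R_U (a : ℝ) : Integrable fun z => z * R a (U z) := by
  have h := integrable_mul_U_mul_one_sub_U.mul_bdd (g := fun z => U z - a) (c := 1 + |a|)
    (continuous_U.sub continuous_const).aestronglyMeasurable
    (Eventually.of_forall fun z => ?_)
  · convert h using 2 with z
    simp only [R]; ring
  · calc ‖U z - a‖ ≤ ‖U z‖ + ‖a‖ := norm_sub_le _ _
      _ ≤ 1 + |a| := by
        rw [norm_of_nonneg (U_pos z).le, norm_eq_abs]; linarith [U_lt_one z]

/-- For every real parameter `a`, the integral of `z·R(U(z))` over `z ∈ ℝ` equals `−1/2`. -/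
theorem integral_z_mul_R_kink (a : ℝ) :
    ∫ z : ℝ, z * R a (U z) = -(1 / 2) := by
  rw [integral_of_hasDerivAt_of_tendsto (hasDerivAt_kinkPrimitive a) (integrable_mul_R_U a)
    (tendsto_kinkPrimitive_atBot a) (tendsto_kinkPrimitive_atTop a)]
  norm_num
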